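/- There exists a constant C > 0 such that for every n ∈ ℕ (n ≥ 2) there exists a density 𝔣: I_n → [0,∞) with ∑_{m=0}^n 𝔣(m) π_n(m) = 1, 𝔥_n(𝔣|π_n) > 0, and 𝔇_n^bd(𝔣;π_n) ≤ C n^{-1/2} 𝔥_n(𝔣|π_n); that is, the logarithmic Sobolev constant λ_n = inf{ 𝔇_n^bd(𝔣;π_n)/𝔥_n(𝔣|π_n) : 𝔣 a density with respect to π_n, 𝔥_n(𝔣|π_n) ≠ 0 } satisfies λ_n ≤ C n^{-1/2}. -/

import Mathlib

open Real Filter Finset MeasureTheory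
open scoped Classical BigOperators NNReal

noncomputable section

/-- Configurations of the exclusion–Glauber process on the discrete torus `ℤ/nℤ`. -/
abbrev Cfg (n : ℕ) := Fin n → Bool

/-- Cyclic successor `x+1` on the discrete torus. -/
def fsucc {n : ℕ} (x : Fin n) : Fin n := ⟨(x.1 + 1) % n, Nat.mod_lt _ x.pos⟩

/-- Cyclic predecessor `x-1` on the discrete torus. -/
def fpred {n : ℕ} (x : Fin n) : Fin n := ⟨(x.1 + n - 1) % n, Nat.mod_lt _ x.pos⟩

/-- `η^{x,x+1}` : exchange the occupation variables at `x` and `x+1`. -/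
def swapCfg {n : ℕ} (η : Cfg n) (x : Fin n) : Cfg n :=
  fun y => if y = x then η (fsucc x) else if y = fsucc x then η x else η y

/-- `η^x` : flip the occupation variable at `x`. -/
def flipCfg {n : ℕ} (η : Cfg n) (x : Fin n) : Cfg n :=
  Function.update η x (! η x)

/-- Occupation variable `η(x) ∈ {0,1}` as a real number. -/
def occ {n : ℕ} (η : Cfg n) (x : Fin n) : ℝ := if η x then 1 else 0

/-- Spin variable `σ(x) = 2η(x) - 1`. -/
def spin {n : ℕ} (η : Cfg n) (x : Fin n) : ℝ := 2 * occ η x - 1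

/-- `γ_n = (1 - θ/√n)/2`. -/
def gam (θ : ℝ) (n : ℕ) : ℝ := (1 - θ / Real.sqrt n) / 2

/-- Glauber jump rates `c_x(η)`. -/
def cRate (θ : ℝ) {n : ℕ} (η : Cfg n) (x : Fin n) : ℝ :=
  1 - gam θ n * spin η x * (spin η (fpred x) + spin η (fsucc x))
    + gam θ n ^ 2 * spin η (fpred x) * spin η (fsucc x)

/-- Exclusion generator. -/
def LexGen {n : ℕ} (f : Cfg n → ℝ) (η : Cfg n) : ℝ :=
  ∑ x, (f (swapCfg η x) - f η)

/-- Glauber generator. -/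
def LG (θ : ℝ) {n : ℕ} (f : Cfg n → ℝ) (η : Cfg n) : ℝ :=
  ∑ x, cRate θ η x * (f (flipCfg η x) - f η)

/-- Full generator `L_n = n² L_n^ex + a L_n^G`. -/
def Lfull (θ a : ℝ) {n : ℕ} (f : Cfg n → ℝ) (η : Cfg n) : ℝ :=
  (n : ℝ) ^ 2 * LexGen f η + a * LG θ f η

/-- `μ` is an invariant (stationary) probability measure for `L_n`. -/
def IsStationaryLn (θ a : ℝ) (n : ℕ) (μ : Cfg n → ℝ) : Prop :=
  (∀ η, 0 ≤ μ η) ∧ (∑ η, μ η = 1) ∧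
    ∀ f : Cfg n → ℝ, ∑ η, Lfull θ a f η * μ η = 0

/-- Rescaled total magnetization `Y^n = n^{-3/4} ∑_x (η(x) - 1/2)`. -/
def magY (n : ℕ) (η : Cfg n) : ℝ :=
  (n : ℝ) ^ (-(3 : ℝ) / 4) * ∑ x, (occ η x - 1 / 2)

/-- The quartic potential `V(y) = θ y² + y⁴/2`. -/
def Vpot (θ : ℝ) (y : ℝ) : ℝ := θ * y ^ 2 + y ^ 4 / 2

/-- Normalization `Z = ∫ e^{-2V}`. -/
def Zconst (θ : ℝ) : ℝ := ∫ y : ℝ, Real.exp (-2 * Vpot θ y)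

/-- The function `U`. -/
def Ufun (θ : ℝ) (n : ℕ) (ϱ : ℝ) : ℝ :=
  (gam θ n)⁻¹ * ((1 + 2 * gam θ n * ϱ) * Real.log (1 + 2 * gam θ n * ϱ)
    + (1 - 2 * gam θ n * ϱ) * Real.log (1 - 2 * gam θ n * ϱ))

/-- `U_0(ρ) = U(ρ - 1/2)`. -/
def U0 (θ : ℝ) (n : ℕ) (ρ : ℝ) : ℝ := Ufun θ n (ρ - 1 / 2)

/-- Total magnetization `m̄_n(η) = ∑_x (η(x) - 1/2)`. -/
def mbar {n : ℕ} (η : Cfg n) : ℝ := ∑ x, (occ η x - 1 / 2)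

/-- Uniform measure on `Ω_n`. -/
def nuHalf (n : ℕ) (_ : Cfg n) : ℝ := 1 / 2 ^ n

/-- Normalizing constant `Z_U^n`. -/
def ZU (θ : ℝ) (n : ℕ) : ℝ :=
  ∑ η : Cfg n, Real.exp (n * Ufun θ n (mbar η / n)) * nuHalf n η

/-- The tilted reference measure `ν_U^n`. -/
def nuU (θ : ℝ) (n : ℕ) (η : Cfg n) : ℝ :=
  (ZU θ n)⁻¹ * Real.exp (n * Ufun θ n (mbar η / n)) * nuHalf n η

/-- Relative entropy `H_n(f | ν_U^n) = ∫ f log f dν_U^n`. -/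
def entU (θ : ℝ) (n : ℕ) (f : Cfg n → ℝ) : ℝ :=
  ∑ η, f η * Real.log (f η) * nuU θ n η

/-- Exclusion Dirichlet form `D_n^ex(f; ν_U^n)`. -/
def Dex (θ : ℝ) (n : ℕ) (f : Cfg n → ℝ) : ℝ :=
  (1 / 2) * ∑ x, ∑ η, (Real.sqrt (f (swapCfg η x)) - Real.sqrt (f η)) ^ 2 * nuU θ n η

/-- Glauber Dirichlet form `D_n^G(f; ν_U^n)`. -/
def DG (θ : ℝ) (n : ℕ) (f : Cfg n → ℝ) : ℝ :=
  (1 / 2) * ∑ x, ∑ η, cRate θ η x * (Real.sqrt (f (flipCfg η x)) - Real.sqrt (f η)) ^ 2 * nuU θ n η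

/-- `f` is a probability density with respect to `ν_U^n`. -/
def IsDensity (θ : ℝ) (n : ℕ) (f : Cfg n → ℝ) : Prop :=
  (∀ η, 0 ≤ f η) ∧ ∑ η, f η * nuU θ n η = 1

/-- Number of particles of a configuration. -/
def ones {n : ℕ} (η : Cfg n) : ℕ := ∑ x, if η x then 1 else 0

/-- `Ω_{n,m}`: configurations with exactly `m` particles. -/
def levelSet (n m : ℕ) : Finset (Cfg n) := Finset.univ.filter fun η => ones η = m

/-- Average `⟨f⟩` with respect to the uniform measure on `Ω_{n,m}`. -/
def avgLevel {n : ℕ} (f : Cfg n → ℝ) (m : ℕ) : ℝ :=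
  (∑ η ∈ levelSet n m, f η) / (levelSet n m).card

/-- `π_n(m) = ν_U^n(Ω_{n,m})`. -/
def piBD (θ : ℝ) (n m : ℕ) : ℝ := ∑ η ∈ levelSet n m, nuU θ n η

/-- Birth rate `b_n(m)`. -/
def bBD (θ : ℝ) (n m : ℕ) : ℝ :=
  ((n : ℝ) - m) * Real.exp (n * (U0 θ n (((m : ℝ) + 1) / n) - U0 θ n ((m : ℝ) / n)) / 2)

/-- Death rate `d_n(m)`. -/
def dBD (θ : ℝ) (n m : ℕ) : ℝ :=
  (m : ℝ) * Real.exp (n * (U0 θ n (((m : ℝ) - 1) / n) - U0 θ n ((m : ℝ) / n)) / 2)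

/-- Relative entropy for the birth–death chain. -/
def entBD (θ : ℝ) (n : ℕ) (g : ℕ → ℝ) : ℝ :=
  ∑ m ∈ Finset.range (n + 1), g m * Real.log (g m) * piBD θ n m

/-- Dirichlet form of the birth–death chain. -/
def DBD (θ : ℝ) (n : ℕ) (g : ℕ → ℝ) : ℝ :=
  (1 / 2) * ∑ m ∈ Finset.range n,
    bBD θ n m * (Real.sqrt (g (m + 1)) - Real.sqrt (g m)) ^ 2 * piBD θ n m

/-- `π_n({l,…,n})`. -/
def piTail (θ : ℝ) (n l : ℕ) : ℝ := ∑ k ∈ Finset.Icc l n, piBD θ n k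

/-- `π_n({0,…,l})`. -/
def piHead (θ : ℝ) (n l : ℕ) : ℝ := ∑ k ∈ Finset.Icc 0 l, piBD θ n k

/-- `E(ρ) = ρ log ρ + (1-ρ) log(1-ρ) + log 2`. -/
def Efun (ρ : ℝ) : ℝ := ρ * Real.log ρ + (1 - ρ) * Real.log (1 - ρ) + Real.log 2

/-- `W = E - U_0`. -/
def Wfun (θ : ℝ) (n : ℕ) (ρ : ℝ) : ℝ := Efun ρ - U0 θ n ρ

/-- `Ψ(x) = -x log x`. -/
def Psi (x : ℝ) : ℝ := -x * Real.log x

/-!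
Near `m = n/2` the weights `π_n(m)` are flat on a window of width `K ≍ n^{3/4}`. Indeed
`π_n(m+1)/π_n(m) = (n-m)/(m+1) · exp (n (U_0((m+1)/n) - U_0(m/n)))`, and by convexity of
`x log x` the exponential factor is at least `((1+βϱ)/(1-βϱ))²` with `β = 2γ_n`,
`ϱ = m/n - 1/2`; against the binomial factor `(1-2ϱ)/(1+2ϱ)` this leaves a defect of order
`|1-β| ϱ + ϱ³ = O(n^{-3/4})` per step, hence a bounded factor over `2K` steps.

The test density is proportional to the square of a ramp rising linearly from `0` at `n/2` to
`K` at `n/2 + K`. It lives on `{m > n/2}`, of `π_n`-mass at most `1/2` by the symmetry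
`m ↦ n - m`, so its entropy is at least `log 2`. Its Dirichlet form is `O(n/K²) = O(n^{-1/2})`:
`b_n(m) π_n(m)` is the geometric mean of `(n-m) π_n(m)` and `(m+1) π_n(m+1)`, and flatness
bounds the mass on the ramp by that on the plateau. The finitely many small `n` only affect
the constant.
-/

lemma mul_log_sub_mul_log_ge {x y : ℝ} (hx : 0 < x) (hy : 0 ≤ y) :
    (y - x) * (log x + 1) ≤ y * log y - x * log x := by
  rcases hy.eq_or_lt with rfl | hy
  · simp only [zero_sub, log_zero, mul_zero]
    nlinarith
  have h := Real.self_sub_one_le_mul_log (div_pos hy hx).le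
  rw [log_div hy.ne' hx.ne'] at h
  have h' := mul_le_mul_of_nonneg_left h hx.le
  field_simp at h'
  nlinarith

lemma log_two_le_sum_mul_log {ι : Type*} {s : Finset ι} {g w : ι → ℝ}
    (hg : ∀ i ∈ s, 0 ≤ g i) (hw : ∀ i ∈ s, 0 ≤ w i) (hnorm : ∑ i ∈ s, g i * w i = 1)
    (hmass : ∑ i ∈ s, w i ≤ 1 / 2) :
    log 2 ≤ ∑ i ∈ s, g i * log (g i) * w i := calc
  log 2 ≤ log 2 * ∑ i ∈ s, g i * w i + ∑ i ∈ s, g i * w i - 2 * ∑ i ∈ s, w i := by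
    rw [hnorm]; linarith
  _ = ∑ i ∈ s, (g i * log 2 + g i - 2) * w i := by
    rw [Finset.mul_sum, Finset.mul_sum, ← Finset.sum_add_distrib, ← Finset.sum_sub_distrib]
    exact Finset.sum_congr rfl fun i _ => by ring
  _ ≤ ∑ i ∈ s, g i * log (g i) * w i := by
    refine Finset.sum_le_sum fun i hi => mul_le_mul_of_nonneg_right ?_ (hw i hi)
    have := mul_log_sub_mul_log_ge two_pos (hg i hi)
    linarith

lemma one_sub_two_mul_mul_one_add_sq_ge {x β : ℝ} (hx : 0 ≤ x) (hβx : β * x ≤ 1 / 2) :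
    (1 - 16 * (x * |1 - β| + β ^ 2 * x ^ 3)) * ((1 + 2 * x) * (1 - β * x) ^ 2) ≤
      (1 - 2 * x) * (1 + β * x) ^ 2 := by
  set S := x * |1 - β| + β ^ 2 * x ^ 3
  set D := (1 + 2 * x) * (1 - β * x) ^ 2
  have hS : 0 ≤ S := by positivity
  have hD : 1 / 4 ≤ D := by nlinarith [sq_nonneg (1 - β * x)]
  have hE : 4 * x * (1 - β) + 4 * β ^ 2 * x ^ 3 ≤ 4 * S := by
    nlinarith [mul_le_mul_of_nonneg_left (le_abs_self (1 - β)) hx]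
  have hid : (1 - 2 * x) * (1 + β * x) ^ 2 = D - (4 * x * (1 - β) + 4 * β ^ 2 * x ^ 3) := by
    ring
  nlinarith [mul_le_mul_of_nonneg_left hD hS]

lemma exp_neg_two_mul_le_one_sub {x : ℝ} (hx0 : 0 ≤ x) (hx : x ≤ 1 / 2) :
    exp (-(2 * x)) ≤ 1 - x := by
  have h : 1 ≤ (1 - x) * exp (2 * x) := by nlinarith [add_one_le_exp (2 * x)]
  rw [exp_neg, inv_le_iff_one_le_mul₀ (exp_pos _)]
  linarith

lemma pow_mul_le_of_mul_le_succ {u : ℕ → ℝ} {c : ℝ} {a b : ℕ} (hc : 0 ≤ c)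
    (h : ∀ k, a ≤ k → k < b → c * u k ≤ u (k + 1)) {i j : ℕ} (hai : a ≤ i) (hij : i ≤ j)
    (hjb : j ≤ b) : c ^ (j - i) * u i ≤ u j := by
  induction j, hij using Nat.le_induction with
  | base => simp
  | succ j hij ih =>
    calc c ^ (j + 1 - i) * u i = c * (c ^ (j - i) * u i) := by
          rw [Nat.sub_add_comm hij, pow_succ]; ring
      _ ≤ c * u j := mul_le_mul_of_nonneg_left (ih (by omega)) hc
      _ ≤ u (j + 1) := h j (by omega) (by omega)

lemma exists_forall_of_eventually {P : ℕ → ℝ → Prop} (hmono : ∀ n, Monotone (P n))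
    (hex : ∀ n, ∃ c, P n c) {A : ℝ} (hA : ∀ᶠ n in atTop, P n A) : ∃ C, A ≤ C ∧ ∀ n, P n C := by
  obtain ⟨N, hN⟩ := eventually_atTop.1 hA
  choose c hc using hex
  obtain ⟨B, hB⟩ := ((Set.finite_Iio N).image c).bddAbove
  refine ⟨max A B, le_max_left _ _, fun n => ?_⟩
  rcases lt_or_ge n N with h | h
  · exact hmono n (le_max_of_le_right (hB ⟨n, h, rfl⟩)) (hc n)
  · exact hmono n (le_max_left _ _) (hN n h)

lemma ZU_pos (θ : ℝ) (n : ℕ) : 0 < ZU θ n :=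
  Finset.sum_pos (fun η _ => by unfold nuHalf; positivity) ⟨fun _ => false, Finset.mem_univ _⟩

lemma nuU_pos (θ : ℝ) (n : ℕ) (η : Cfg n) : 0 < nuU θ n η := by
  have := ZU_pos θ n
  unfold nuU nuHalf
  positivity

lemma piBD_nonneg (θ : ℝ) (n m : ℕ) : 0 ≤ piBD θ n m :=
  Finset.sum_nonneg fun η _ => (nuU_pos θ n η).le

lemma ones_eq_card {n : ℕ} (η : Cfg n) : ones η = #{x | η x = true} := by
  rw [Finset.card_filter]
  rfl

lemma ones_le {n : ℕ} (η : Cfg n) : ones η ≤ n := by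
  simpa [ones_eq_card] using Finset.card_le_univ (univ.filter fun x => η x = true)

lemma card_levelSet (n m : ℕ) : #(levelSet n m) = n.choose m := calc
  #(levelSet n m) = #(powersetCard m (univ : Finset (Fin n))) := by
    refine Finset.card_nbij' (fun η => univ.filter fun x => η x = true)
      (fun s x => decide (x ∈ s)) ?_ ?_ ?_ ?_
    · intro η hη
      simpa [levelSet, ones_eq_card] using hη
    · intro s hs
      simp only [mem_coe, mem_powersetCard] at hs
      simp [levelSet, ones_eq_card, hs.2]
    · intro η _
      funext x
      simp
    · intro s _
      ext x
      simp
  _ = n.choose m := by simp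

lemma mbar_of_mem_levelSet {n m : ℕ} {η : Cfg n} (hη : η ∈ levelSet n m) :
    mbar η = m - n / 2 := by
  have hm : ones η = m := (Finset.mem_filter.1 hη).2
  have hocc : ∑ x, occ η x = m := by
    rw [← hm, ones]
    push_cast
    rfl
  simp [mbar, Finset.sum_sub_distrib, hocc]
  ring

lemma piBD_eq (θ : ℝ) {n : ℕ} (hn : 0 < n) (m : ℕ) :
    piBD θ n m = n.choose m * exp (n * U0 θ n (m / n)) / (2 ^ n * ZU θ n) := by
  have hnu : ∀ η ∈ levelSet n m,
      nuU θ n η = exp (n * U0 θ n (m / n)) / (2 ^ n * ZU θ n) := by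
    intro η hη
    have harg : mbar η / n = (m : ℝ) / n - 1 / 2 := by
      rw [mbar_of_mem_levelSet hη]
      field_simp
    rw [nuU, nuHalf, harg, U0]
    field_simp
  rw [piBD, Finset.sum_congr rfl hnu, Finset.sum_const, card_levelSet, nsmul_eq_mul]
  ring

lemma piBD_pos (θ : ℝ) {n m : ℕ} (hm : m ≤ n) : 0 < piBD θ n m :=
  Finset.sum_pos (fun η _ => nuU_pos θ n η)
    (Finset.card_pos.1 (by rw [card_levelSet]; exact Nat.choose_pos hm))

lemma sum_piBD (θ : ℝ) (n : ℕ) : ∑ m ∈ range (n + 1), piBD θ n m = 1 := by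
  have hfib : ∑ m ∈ range (n + 1), piBD θ n m = ∑ η, nuU θ n η :=
    Finset.sum_fiberwise_of_maps_to (g := ones)
      (fun η _ => Finset.mem_range.2 (Nat.lt_succ_of_le (ones_le η))) _
  simp only [hfib, nuU, mul_assoc, ← Finset.mul_sum]
  exact inv_mul_cancel₀ (ZU_pos θ n).ne'

lemma Ufun_neg (θ : ℝ) (n : ℕ) (ϱ : ℝ) : Ufun θ n (-ϱ) = Ufun θ n ϱ := by
  simp only [Ufun, mul_neg, sub_neg_eq_add, ← sub_eq_add_neg]
  ring

lemma piBD_symm (θ : ℝ) {n m : ℕ} (hm : m ≤ n) : piBD θ n (n - m) = piBD θ n m := by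
  rcases Nat.eq_zero_or_pos n with rfl | hn
  · rw [Nat.le_zero.1 hm]
  have hU : U0 θ n (((n - m : ℕ) : ℝ) / n) = U0 θ n (m / n) := by
    rw [U0, U0, ← Ufun_neg]
    congr 1
    push_cast [Nat.cast_sub hm]
    field_simp
    ring
  rw [piBD_eq θ hn, piBD_eq θ hn, Nat.choose_symm hm, hU]

lemma sum_piBD_Ioc_le_half (θ : ℝ) {n a : ℕ} (ha : n ≤ 2 * a) :
    ∑ m ∈ Ioc a n, piBD θ n m ≤ 1 / 2 := by
  have hreflect : ∑ m ∈ Ioc a n, piBD θ n m = ∑ k ∈ range (n - a), piBD θ n k := by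
    refine Finset.sum_nbij' (fun m => n - m) (fun k => n - k) ?_ ?_ ?_ ?_ ?_
    all_goals intro m hm
    all_goals simp only [mem_Ioc, mem_range] at hm
    · simp only [mem_range]; omega
    · simp only [mem_Ioc]; omega
    · omega
    · omega
    · exact (piBD_symm θ hm.2).symm
  have hdisj : Disjoint (range (n - a)) (Ioc a n) := by
    rw [Finset.disjoint_left]
    intro m h h'
    simp only [mem_range, mem_Ioc] at h h'
    omega
  have hsub : range (n - a) ∪ Ioc a n ⊆ range (n + 1) := by
    intro m h
    simp only [mem_union, mem_range, mem_Ioc] at h ⊢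
    omega
  have := Finset.sum_le_sum_of_subset_of_nonneg hsub fun m _ _ => piBD_nonneg θ n m
  rw [Finset.sum_union hdisj, ← hreflect, sum_piBD] at this
  linarith

lemma piBD_succ_mul (θ : ℝ) {n m : ℕ} (hm : m < n) :
    piBD θ n (m + 1) * (m + 1) =
      piBD θ n m * (n - m) * exp (n * (U0 θ n ((m + 1) / n) - U0 θ n (m / n))) := by
  have hn : 0 < n := by omega
  have hchoose : (n.choose (m + 1) : ℝ) * (m + 1) = n.choose m * (n - m) := by
    have h := congrArg (Nat.cast (R := ℝ)) (Nat.choose_succ_right_eq n m)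
    push_cast [Nat.cast_sub hm.le] at h
    exact h
  have hexp : exp (n * (U0 θ n ((m + 1) / n) - U0 θ n (m / n)))
      = exp (n * U0 θ n ((m + 1) / n)) / exp (n * U0 θ n (m / n)) := by
    rw [mul_sub, exp_sub]
  rw [piBD_eq θ hn, piBD_eq θ hn, hexp]
  push_cast
  have := ZU_pos θ n
  field_simp
  exact hchoose

lemma bBD_mul_piBD_le (θ : ℝ) {n m : ℕ} (hm : m < n) :
    bBD θ n m * piBD θ n m ≤ (n + 1) / 4 * (piBD θ n m + piBD θ n (m + 1)) := by
  set x := piBD θ n m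
  set y := piBD θ n (m + 1)
  set X := (n : ℝ) * (U0 θ n ((m + 1) / n) - U0 θ n (m / n))
  have hx : 0 ≤ x := piBD_nonneg θ n m
  have hy : 0 ≤ y := piBD_nonneg θ n (m + 1)
  have hmn : (m : ℝ) ≤ n := by exact_mod_cast hm.le
  have hsq : (bBD θ n m * x) ^ 2 = (n - m) * (m + 1) * (x * y) := by
    have hexp : exp (X / 2) ^ 2 = exp X := by rw [sq, ← exp_add, add_halves]
    have hratio := piBD_succ_mul θ hm
    rw [bBD, mul_pow, mul_pow, hexp]
    linear_combination (-(n - m) * x) * hratio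
  have hprod : ((n : ℝ) - m) * (m + 1) ≤ ((n + 1) / 2) ^ 2 := by
    nlinarith [sq_nonneg ((n : ℝ) - m - (m + 1))]
  have hxy : x * y ≤ ((x + y) / 2) ^ 2 := by nlinarith [sq_nonneg (x - y)]
  have hb : 0 ≤ bBD θ n m * x := mul_nonneg (mul_nonneg (by linarith) (exp_pos _).le) hx
  refine (pow_le_pow_iff_left₀ hb (by positivity) two_ne_zero).1 ?_
  calc (bBD θ n m * x) ^ 2 = (n - m) * (m + 1) * (x * y) := hsq
    _ ≤ ((n + 1) / 2) ^ 2 * ((x + y) / 2) ^ 2 :=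
      mul_le_mul hprod hxy (mul_nonneg hx hy) (sq_nonneg _)
    _ = ((n + 1) / 4 * (x + y)) ^ 2 := by ring

lemma Ufun_sub_ge (θ : ℝ) (n : ℕ) {ϱ h : ℝ} (hγ : 0 < gam θ n) (hh : 0 ≤ h)
    (hp : 0 < 1 + 2 * gam θ n * ϱ) (hq : 0 < 1 - 2 * gam θ n * (ϱ + h)) :
    2 * h * (log (1 + 2 * gam θ n * ϱ) - log (1 - 2 * gam θ n * ϱ)) ≤
      Ufun θ n (ϱ + h) - Ufun θ n ϱ := by
  set γ := gam θ n
  have hq' : 0 < 1 - 2 * γ * ϱ := by nlinarith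
  have hup := mul_log_sub_mul_log_ge hp (by nlinarith : 0 ≤ 1 + 2 * γ * (ϱ + h))
  have hdown := mul_log_sub_mul_log_ge hq' hq.le
  rw [show Ufun θ n (ϱ + h) - Ufun θ n ϱ = γ⁻¹ *
      ((1 + 2 * γ * (ϱ + h)) * log (1 + 2 * γ * (ϱ + h)) - (1 + 2 * γ * ϱ) * log (1 + 2 * γ * ϱ)
        + ((1 - 2 * γ * (ϱ + h)) * log (1 - 2 * γ * (ϱ + h))
          - (1 - 2 * γ * ϱ) * log (1 - 2 * γ * ϱ))) by simp only [Ufun]; ring,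
    le_inv_mul_iff₀ hγ]
  linarith

lemma sq_div_le_exp_U0_sub (θ : ℝ) {n m : ℕ} {β ϱ : ℝ} (hn : 0 < n) (hβ : 2 * gam θ n = β)
    (hϱ : (m : ℝ) / n - 1 / 2 = ϱ) (hβ0 : 0 < β) (hp : 0 < 1 + β * ϱ)
    (hq : β * (ϱ + 1 / n) < 1) :
    ((1 + β * ϱ) / (1 - β * ϱ)) ^ 2 ≤ exp (n * (U0 θ n ((m + 1) / n) - U0 θ n (m / n))) := by
  have hnR : (0 : ℝ) < n := by exact_mod_cast hn
  have hq' : 0 < 1 - β * ϱ := by nlinarith [div_pos one_pos hnR]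
  have hU : U0 θ n ((m + 1) / n) - U0 θ n (m / n) = Ufun θ n (ϱ + 1 / n) - Ufun θ n ϱ := by
    rw [U0, U0, ← hϱ, add_div]
    ring_nf
  have hsub := Ufun_sub_ge θ n (h := 1 / n) (by linarith) (by positivity)
    (by rwa [hβ]) (by rw [hβ]; linarith)
  rw [hβ, ← hU] at hsub
  rw [← exp_log (div_pos hp hq'), ← exp_nat_mul, log_div hp.ne' hq'.ne']
  refine exp_le_exp.2 (le_trans (le_of_eq ?_) (mul_le_mul_of_nonneg_left hsub hnR.le))
  field_simp
  ring

lemma piBD_succ_ge (θ : ℝ) {n m : ℕ} {β ϱ : ℝ} (hm : m < n) (hβ : 2 * gam θ n = β)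
    (hϱ : (m : ℝ) / n - 1 / 2 = ϱ) (hβ0 : 0 < β) (hϱ0 : 0 ≤ ϱ)
    (hsmall : β * (ϱ + 1 / n) ≤ 1 / 2) :
    (1 - 16 * (ϱ * |1 - β| + β ^ 2 * ϱ ^ 3) - 1 / (m + 1)) * piBD θ n m ≤ piBD θ n (m + 1) := by
  set η := 16 * (ϱ * |1 - β| + β ^ 2 * ϱ ^ 3)
  have hn : (0 : ℝ) < n := by exact_mod_cast (Nat.zero_lt_of_lt hm)
  have hβϱ : β * ϱ ≤ 1 / 2 := by nlinarith [div_pos one_pos hn]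
  have hq : (1 - β * ϱ) ^ 2 ≠ 0 := by nlinarith
  have hm' : (m : ℝ) = n / 2 * (1 + 2 * ϱ) := by rw [← hϱ]; field_simp; ring
  have hnm : (n : ℝ) - m = n / 2 * (1 - 2 * ϱ) := by rw [hm']; ring
  have key : (1 - η) * m * piBD θ n m ≤ piBD θ n (m + 1) * (m + 1) := calc
    (1 - η) * m * piBD θ n m
        = piBD θ n m * (n / 2) * ((1 - η) * ((1 + 2 * ϱ) * (1 - β * ϱ) ^ 2)) / (1 - β * ϱ) ^ 2 := by
      rw [hm', mul_div_assoc, mul_div_assoc, mul_div_cancel_right₀ _ hq]; ring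
    _ ≤ piBD θ n m * (n / 2) * ((1 - 2 * ϱ) * (1 + β * ϱ) ^ 2) / (1 - β * ϱ) ^ 2 := by
      have := one_sub_two_mul_mul_one_add_sq_ge hϱ0 hβϱ
      have := piBD_nonneg θ n m
      gcongr
    _ = piBD θ n m * (n - m) * ((1 + β * ϱ) / (1 - β * ϱ)) ^ 2 := by rw [hnm, div_pow]; ring
    _ ≤ piBD θ n m * (n - m) * exp (n * (U0 θ n ((m + 1) / n) - U0 θ n (m / n))) := by
      have := piBD_nonneg θ n m
      have : (m : ℝ) ≤ n := by exact_mod_cast hm.le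
      gcongr
      exact sq_div_le_exp_U0_sub θ (by omega) hβ hϱ hβ0 (by positivity) (by linarith)
    _ = piBD θ n (m + 1) * (m + 1) := (piBD_succ_mul θ hm).symm
  have hη : 0 ≤ η := by positivity
  rw [← mul_le_mul_iff_of_pos_right (by positivity : (0 : ℝ) < m + 1)]
  calc (1 - η - 1 / (m + 1)) * piBD θ n m * (m + 1)
      = (1 - η) * m * piBD θ n m - η * piBD θ n m := by field_simp; ring
    _ ≤ piBD θ n (m + 1) * (m + 1) := by nlinarith [mul_nonneg hη (piBD_nonneg θ n m)]

lemma abs_one_sub_two_mul_gam (θ : ℝ) (n : ℕ) : |1 - 2 * gam θ n| = |θ| / √n := by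
  rw [show 1 - 2 * gam θ n = θ / √n by simp only [gam]; ring, abs_div,
    abs_of_nonneg (sqrt_nonneg _)]

lemma step_defect_le {θ β ϱ : ℝ} {n K m : ℕ} (hK : 0 < K) (hK4 : K ^ 4 ≤ n ^ 3) (hKn : K ≤ n)
    (hm : n ≤ 2 * m) (hβ : |1 - β| = |θ| / √n) (hβ0 : 0 ≤ β) (hβ32 : β ≤ 3 / 2) (hϱ0 : 0 ≤ ϱ)
    (hϱ : ϱ ≤ 3 * K / n) :
    16 * (ϱ * |1 - β| + β ^ 2 * ϱ ^ 3) + 1 / (m + 1) ≤ (48 * |θ| + 1000) / K := by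
  have hKR : (0 : ℝ) < K := by exact_mod_cast hK
  have hn : (0 : ℝ) < n := by exact_mod_cast hK.trans_le hKn
  have hs : 0 < √(n : ℝ) := sqrt_pos.2 hn
  have hK4R : (K : ℝ) ^ 4 ≤ n ^ 3 := by exact_mod_cast hK4
  have hK2 : (K : ℝ) ^ 2 ≤ n * √n := by
    refine (pow_le_pow_iff_left₀ (by positivity) (by positivity) two_ne_zero).1 ?_
    rw [mul_pow, sq_sqrt hn.le]
    linarith
  have hdrift : ϱ * |1 - β| ≤ 3 * |θ| / K := calc
    ϱ * |1 - β| ≤ 3 * K / n * (|θ| / √n) := by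
      rw [hβ]; exact mul_le_mul_of_nonneg_right hϱ (by positivity)
    _ ≤ 3 * |θ| / K := by
      rw [div_mul_div_comm, div_le_div_iff₀ (by positivity) hKR]
      nlinarith [abs_nonneg θ]
  have hcubic : β ^ 2 * ϱ ^ 3 ≤ 243 / 4 / K := calc
    β ^ 2 * ϱ ^ 3 ≤ (3 / 2) ^ 2 * (3 * K / n) ^ 3 :=
      mul_le_mul (pow_le_pow_left₀ hβ0 hβ32 2) (pow_le_pow_left₀ hϱ0 hϱ 3)
        (by positivity) (by positivity)
    _ = 243 / 4 * K ^ 3 / n ^ 3 := by ring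
    _ ≤ 243 / 4 / K := by
      rw [div_le_div_iff₀ (by positivity) hKR]
      nlinarith
  have hgap : 1 / ((m : ℝ) + 1) ≤ 2 / K := by
    rw [div_le_div_iff₀ (by positivity) hKR]
    have : (K : ℝ) ≤ 2 * m := by exact_mod_cast hKn.trans hm
    linarith
  have : (48 * |θ| + 1000) / K = 16 * (3 * |θ| / K + 243 / 4 / K) + 2 / K + 26 / K := by ring
  have : 0 ≤ 26 / (K : ℝ) := by positivity
  linarith

lemma piBD_succ_ge_of_window (θ : ℝ) {n K m : ℕ} (hK : 0 < K) (hK4 : K ^ 4 ≤ n ^ 3)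
    (hKn : 9 * K ≤ n) (hθ : 4 * θ ^ 2 ≤ n) (ham : (n + 1) / 2 ≤ m)
    (hmb : m < (n + 1) / 2 + 2 * K) :
    (1 - (48 * |θ| + 1000) / K) * piBD θ n m ≤ piBD θ n (m + 1) := by
  have hn : (0 : ℝ) < n := by exact_mod_cast (by omega : 0 < n)
  set β := 2 * gam θ n
  have habs := abs_one_sub_two_mul_gam θ n
  have hβ12 : |1 - β| ≤ 1 / 2 := by
    rw [habs, div_le_iff₀ (sqrt_pos.2 hn)]
    nlinarith [sq_abs θ, abs_nonneg θ, sq_sqrt hn.le, sqrt_nonneg (n : ℝ)]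
  have hβ0 : 1 / 2 ≤ β := by linarith [le_abs_self (1 - β)]
  have hβ32 : β ≤ 3 / 2 := by linarith [neg_abs_le (1 - β)]
  set ϱ := (m : ℝ) / n - 1 / 2
  have hϱ0 : 0 ≤ ϱ := by
    rw [sub_nonneg, le_div_iff₀ hn]
    have : (n : ℝ) ≤ 2 * m := by exact_mod_cast (by omega : n ≤ 2 * m)
    linarith
  have hϱ : ϱ + 1 / n ≤ 3 * K / n := by
    rw [show ϱ + 1 / n = (2 * (m + 1) - n) / (2 * n) by simp only [ϱ]; field_simp; ring,
      div_le_div_iff₀ (by positivity) hn]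
    have : 2 * ((m : ℝ) + 1) ≤ n + 6 * K := by exact_mod_cast (by omega : 2 * (m + 1) ≤ n + 6 * K)
    nlinarith
  have hsmall : β * (ϱ + 1 / n) ≤ 1 / 2 := calc
    β * (ϱ + 1 / n) ≤ 3 / 2 * (3 * K / n) := mul_le_mul hβ32 hϱ (by positivity) (by norm_num)
    _ ≤ 1 / 2 := by
      rw [mul_div_assoc', div_le_iff₀ hn]
      have : (9 : ℝ) * K ≤ n := by exact_mod_cast hKn
      linarith
  have hdefect := step_defect_le hK hK4 (by omega) (by omega : n ≤ 2 * m) habs (by linarith)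
    hβ32 hϱ0 (by linarith [div_pos one_pos hn] : ϱ ≤ 3 * K / n)
  calc (1 - (48 * |θ| + 1000) / K) * piBD θ n m
      ≤ (1 - 16 * (ϱ * |1 - β| + β ^ 2 * ϱ ^ 3) - 1 / (m + 1)) * piBD θ n m :=
        mul_le_mul_of_nonneg_right (by linarith) (piBD_nonneg θ n m)
    _ ≤ piBD θ n (m + 1) := piBD_succ_ge θ (by omega) rfl rfl (by linarith) hϱ0 hsmall

lemma piBD_le_exp_mul_piBD (θ : ℝ) {n K : ℕ} (hK4 : K ^ 4 ≤ n ^ 3) (hKn : 9 * K ≤ n)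
    (hθ : 4 * θ ^ 2 ≤ n) (hMK : 2 * (48 * |θ| + 1000) ≤ K) {i j : ℕ} (hai : (n + 1) / 2 ≤ i)
    (hij : i ≤ j) (hjb : j ≤ (n + 1) / 2 + 2 * K) :
    piBD θ n i ≤ exp (4 * (48 * |θ| + 1000)) * piBD θ n j := by
  set M := 48 * |θ| + 1000
  have hM : 0 < M := by positivity
  have hKR : (0 : ℝ) < K := by linarith
  have hMK' : M / K ≤ 1 / 2 := by rw [div_le_iff₀ hKR]; linarith
  have hc0 : 0 ≤ 1 - M / K := by linarith
  have hchain := pow_mul_le_of_mul_le_succ (u := piBD θ n) hc0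
    (fun k hk hk' => piBD_succ_ge_of_window θ (by exact_mod_cast hKR) hK4 hKn hθ hk hk') hai hij hjb
  have hpow : exp (-(4 * M)) ≤ (1 - M / K) ^ (j - i) := calc
    exp (-(4 * M)) = exp (-(2 * (M / K))) ^ (2 * K) := by
      rw [← exp_nat_mul]; congr 1; push_cast; field_simp; ring
    _ ≤ (1 - M / K) ^ (2 * K) :=
      pow_le_pow_left₀ (exp_pos _).le (exp_neg_two_mul_le_one_sub (by positivity) hMK') _
    _ ≤ (1 - M / K) ^ (j - i) :=
      pow_le_pow_of_le_one hc0 (by linarith [div_nonneg hM.le hKR.le]) (by omega)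
  calc piBD θ n i = exp (4 * M) * (exp (-(4 * M)) * piBD θ n i) := by
        rw [← mul_assoc, ← exp_add, add_neg_cancel, exp_zero, one_mul]
    _ ≤ exp (4 * M) * ((1 - M / K) ^ (j - i) * piBD θ n i) := by
        gcongr
        exact piBD_nonneg θ n i
    _ ≤ exp (4 * M) * piBD θ n j := by gcongr

def IsDensityBD (θ : ℝ) (n : ℕ) (g : ℕ → ℝ) : Prop :=
  (∀ m, 0 ≤ g m) ∧ ∑ m ∈ range (n + 1), g m * piBD θ n m = 1

-- Truncated subtraction makes the ramp vanish for `m ≤ a`.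
def ramp (a K m : ℕ) : ℕ := min (m - a) K

def rampDensity (θ : ℝ) (n a K : ℕ) (m : ℕ) : ℝ :=
  (ramp a K m : ℝ) ^ 2 / ∑ k ∈ range (n + 1), (ramp a K k : ℝ) ^ 2 * piBD θ n k

lemma ramp_succ_sub_sq (a K m : ℕ) :
    ((ramp a K (m + 1) : ℝ) - ramp a K m) ^ 2 = if m ∈ Ico a (a + K) then 1 else 0 := by
  split_ifs with h <;> rw [mem_Ico] at h
  · rw [show ramp a K (m + 1) = ramp a K m + 1 by simp only [ramp]; omega]
    push_cast
    ring
  · rw [show ramp a K (m + 1) = ramp a K m by simp only [ramp]; omega]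
    ring

lemma sum_ramp_sq_pos (θ : ℝ) {n a K : ℕ} (hK : 0 < K) (haK : a + K ≤ n) :
    0 < ∑ k ∈ range (n + 1), (ramp a K k : ℝ) ^ 2 * piBD θ n k := by
  refine Finset.sum_pos' (fun k _ => mul_nonneg (sq_nonneg _) (piBD_nonneg θ n k))
    ⟨a + K, mem_range.2 (by omega), ?_⟩
  have : ramp a K (a + K) = K := by simp [ramp]
  rw [this]
  have := piBD_pos θ haK
  positivity

lemma isDensityBD_rampDensity (θ : ℝ) {n a K : ℕ} (hK : 0 < K) (haK : a + K ≤ n) :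
    IsDensityBD θ n (rampDensity θ n a K) := by
  have hZ := sum_ramp_sq_pos θ hK haK
  refine ⟨fun m => by unfold rampDensity; positivity, ?_⟩
  simp only [rampDensity, div_mul_eq_mul_div, ← Finset.sum_div]
  exact div_self hZ.ne'

lemma log_two_le_entBD_rampDensity (θ : ℝ) {n a K : ℕ} (ha : n ≤ 2 * a) (hK : 0 < K)
    (haK : a + K ≤ n) : log 2 ≤ entBD θ n (rampDensity θ n a K) := by
  set g := rampDensity θ n a K
  have hg := isDensityBD_rampDensity θ hK haK
  have hsub : Ioc a n ⊆ range (n + 1) := fun m hm => by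
    simp only [mem_Ioc, mem_range] at hm ⊢; omega
  have hzero : ∀ m ∈ range (n + 1), m ∉ Ioc a n → g m = 0 := fun m hm hm' => by
    simp only [mem_Ioc, mem_range] at hm hm'
    simp [g, rampDensity, ramp, show m - a = 0 by omega]
  have hnorm : ∑ m ∈ Ioc a n, g m * piBD θ n m = 1 := by
    rw [Finset.sum_subset hsub fun m hm hm' => by rw [hzero m hm hm', zero_mul]]
    exact hg.2
  rw [entBD, ← Finset.sum_subset hsub fun m hm hm' => by rw [hzero m hm hm']; simp]
  exact log_two_le_sum_mul_log (fun m _ => hg.1 m) (fun m _ => piBD_nonneg θ n m) hnorm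
    (sum_piBD_Ioc_le_half θ ha)

lemma DBD_rampDensity (θ : ℝ) {n a K : ℕ} (hK : 0 < K) (haK : a + K ≤ n) :
    DBD θ n (rampDensity θ n a K) = (∑ m ∈ Ico a (a + K), bBD θ n m * piBD θ n m) /
      (2 * ∑ k ∈ range (n + 1), (ramp a K k : ℝ) ^ 2 * piBD θ n k) := by
  set Z := ∑ k ∈ range (n + 1), (ramp a K k : ℝ) ^ 2 * piBD θ n k
  have hZ : 0 < Z := sum_ramp_sq_pos θ hK haK
  have hsqrt : ∀ m, √(rampDensity θ n a K m) = ramp a K m / √Z := fun m => by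
    rw [rampDensity, sqrt_div (sq_nonneg _), sqrt_sq (Nat.cast_nonneg _)]
  have hterm : ∀ m, bBD θ n m * (√(rampDensity θ n a K (m + 1)) - √(rampDensity θ n a K m)) ^ 2
      * piBD θ n m = if m ∈ Ico a (a + K) then bBD θ n m * piBD θ n m / Z else 0 := fun m => by
    rw [hsqrt, hsqrt, ← sub_div, div_pow, sq_sqrt hZ.le, ramp_succ_sub_sq]
    split_ifs <;> ring
  have hIco : range n ∩ Ico a (a + K) = Ico a (a + K) :=
    Finset.inter_eq_right.2 fun m hm => by simp only [mem_Ico, mem_range] at hm ⊢; omega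
  rw [DBD, Finset.sum_congr rfl fun m _ => hterm m, Finset.sum_ite_mem, hIco, ← Finset.sum_div]
  field_simp

lemma DBD_rampDensity_le (θ : ℝ) {n a K : ℕ} {C : ℝ} (hK : 0 < K) (haK : a + 2 * K ≤ n)
    (hflat : ∀ {i j}, a ≤ i → i ≤ j → j ≤ a + 2 * K → piBD θ n i ≤ C * piBD θ n j) :
    DBD θ n (rampDensity θ n a K) ≤ C * (n + 1) / (4 * K ^ 2) := by
  set Z := ∑ k ∈ range (n + 1), (ramp a K k : ℝ) ^ 2 * piBD θ n k
  set S := ∑ m ∈ Ico a (a + K), piBD θ n (m + (K + 1))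
  have hZ : 0 < Z := sum_ramp_sq_pos θ hK (by omega)
  have hC : 0 ≤ C := by
    have := hflat le_rfl le_rfl (by omega)
    have := piBD_pos θ (by omega : a ≤ n)
    nlinarith
  have hplateau : K ^ 2 * S ≤ Z := calc
    (K : ℝ) ^ 2 * S
        = ∑ k ∈ Ico (a + (K + 1)) (a + K + (K + 1)), (ramp a K k : ℝ) ^ 2 * piBD θ n k := by
      rw [Finset.mul_sum, ← Finset.sum_Ico_add']
      refine Finset.sum_congr rfl fun m hm => ?_
      rw [mem_Ico] at hm
      rw [show ramp a K (m + (K + 1)) = K by simp only [ramp]; omega]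
    _ ≤ Z := Finset.sum_le_sum_of_subset_of_nonneg
      (fun k hk => by simp only [mem_Ico, mem_range] at hk ⊢; omega)
      fun k _ _ => mul_nonneg (sq_nonneg _) (piBD_nonneg θ n k)
  have hedge : ∑ m ∈ Ico a (a + K), bBD θ n m * piBD θ n m ≤ (n + 1) / 4 * (2 * C * S) := calc
    ∑ m ∈ Ico a (a + K), bBD θ n m * piBD θ n m
        ≤ ∑ m ∈ Ico a (a + K), (n + 1) / 4 * (piBD θ n m + piBD θ n (m + 1)) :=
      Finset.sum_le_sum fun m hm => bBD_mul_piBD_le θ (by rw [mem_Ico] at hm; omega)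
    _ ≤ ∑ m ∈ Ico a (a + K), (n + 1) / 4 * (2 * C * piBD θ n (m + (K + 1))) := by
      refine Finset.sum_le_sum fun m hm => ?_
      rw [mem_Ico] at hm
      have h1 := hflat (j := m + (K + 1)) hm.1 (by omega) (by omega)
      have h2 := hflat (i := m + 1) (j := m + (K + 1)) (by omega) (by omega) (by omega)
      gcongr
      linarith
    _ = (n + 1) / 4 * (2 * C * S) := by rw [← Finset.mul_sum, ← Finset.mul_sum]
  rw [DBD_rampDensity θ hK (by omega), div_le_div_iff₀ (by positivity) (by positivity)]
  have hS : 0 ≤ S := Finset.sum_nonneg fun m _ => piBD_nonneg θ n _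
  calc (∑ m ∈ Ico a (a + K), bBD θ n m * piBD θ n m) * (4 * K ^ 2)
      ≤ (n + 1) / 4 * (2 * C * S) * (4 * K ^ 2) := by gcongr
    _ = C * (n + 1) * (2 * (K ^ 2 * S)) := by ring
    _ ≤ C * (n + 1) * (2 * Z) := by gcongr

/-- `⌊n^{3/4}⌋`, the width of the ramp. -/
def windowSize (n : ℕ) : ℕ := Nat.sqrt (Nat.sqrt (n ^ 3))

lemma windowSize_pow_four_le (n : ℕ) : windowSize n ^ 4 ≤ n ^ 3 := calc
  windowSize n ^ 4 = (windowSize n ^ 2) ^ 2 := by ring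
  _ ≤ Nat.sqrt (n ^ 3) ^ 2 := Nat.pow_le_pow_left (Nat.sqrt_le' _) 2
  _ ≤ n ^ 3 := Nat.sqrt_le' _

lemma lt_windowSize_add_one_pow_four (n : ℕ) : n ^ 3 < (windowSize n + 1) ^ 4 := calc
  n ^ 3 < (Nat.sqrt (n ^ 3) + 1) ^ 2 := Nat.lt_succ_sqrt' _
  _ ≤ ((windowSize n + 1) ^ 2) ^ 2 := Nat.pow_le_pow_left (Nat.lt_succ_sqrt' _) 2
  _ = (windowSize n + 1) ^ 4 := by ring

lemma tendsto_windowSize : Tendsto windowSize atTop atTop := by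
  refine tendsto_atTop_atTop.2 fun b => ⟨b ^ 4, fun n hn => Nat.lt_succ_iff.1 ?_⟩
  refine lt_of_pow_lt_pow_left₀ 4 (Nat.zero_le _) ?_
  calc b ^ 4 ≤ n := hn
    _ ≤ n ^ 3 := Nat.le_self_pow (by norm_num) n
    _ < (windowSize n + 1) ^ 4 := lt_windowSize_add_one_pow_four n

lemma exists_density_dirichlet_le_of_large (θ : ℝ) {n : ℕ} (hθ : 4 * θ ^ 2 ≤ n) (hn : 9 ^ 4 ≤ n)
    (hMK : 2 * (48 * |θ| + 1000) ≤ windowSize n) :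
    ∃ g, IsDensityBD θ n g ∧ log 2 ≤ entBD θ n g ∧
      DBD θ n g ≤ 2 * exp (4 * (48 * |θ| + 1000)) / √n := by
  set K := windowSize n
  have hK : 0 < K := by
    have : (0 : ℝ) < K := by linarith [abs_nonneg θ]
    exact_mod_cast this
  have hK4 := windowSize_pow_four_le n
  have hK4' : n ^ 3 ≤ 16 * K ^ 4 := by
    have := lt_windowSize_add_one_pow_four n
    have : (K + 1) ^ 4 ≤ (2 * K) ^ 4 := Nat.pow_le_pow_left (by omega) 4
    linarith
  have hKn : 9 * K ≤ n := by
    refine (Nat.pow_le_pow_iff_left (n := 4) (by norm_num)).1 ?_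
    calc (9 * K) ^ 4 = 9 ^ 4 * K ^ 4 := by ring
      _ ≤ n * n ^ 3 := Nat.mul_le_mul hn hK4
      _ = n ^ 4 := by ring
  refine ⟨rampDensity θ n ((n + 1) / 2) K, isDensityBD_rampDensity θ hK (by omega),
    log_two_le_entBD_rampDensity θ (by omega) hK (by omega), ?_⟩
  refine (DBD_rampDensity_le θ hK (by omega) (piBD_le_exp_mul_piBD θ hK4 hKn hθ hMK)).trans ?_
  have hn0 : (0 : ℝ) < n := by exact_mod_cast (by omega : 0 < n)
  have hs := sqrt_pos.2 hn0
  have hss : √(n : ℝ) ^ 2 = n := sq_sqrt hn0.le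
  have hK4R : (n : ℝ) ^ 3 ≤ 16 * K ^ 4 := by exact_mod_cast hK4'
  have hn1 : (1 : ℝ) ≤ n := by exact_mod_cast (by omega : 1 ≤ n)
  have hsK : n * √(n : ℝ) ≤ 4 * K ^ 2 := by
    refine (pow_le_pow_iff_left₀ (by positivity) (by positivity) two_ne_zero).1 ?_
    rw [mul_pow, hss]
    nlinarith
  rw [div_le_div_iff₀ (by positivity) hs]
  have := exp_pos (4 * (48 * |θ| + 1000))
  nlinarith [mul_le_mul_of_nonneg_left hsK this.le, mul_le_mul_of_nonneg_left hn1 this.le]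

lemma exists_density_dirichlet_le (θ : ℝ) :
    ∃ A > 0, ∀ n, 2 ≤ n → ∃ g, IsDensityBD θ n g ∧ log 2 ≤ entBD θ n g ∧ DBD θ n g ≤ A / √n := by
  set P : ℕ → ℝ → Prop := fun n A => 2 ≤ n →
    ∃ g, IsDensityBD θ n g ∧ log 2 ≤ entBD θ n g ∧ DBD θ n g ≤ A / √n
  have hmono : ∀ n, Monotone (P n) := fun n A A' hAA' hP hn => by
    obtain ⟨g, hg, hent, hD⟩ := hP hn
    exact ⟨g, hg, hent, hD.trans (by gcongr)⟩
  have hex : ∀ n, ∃ c, P n c := fun n => by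
    set g := rampDensity θ n ((n + 1) / 2) 1
    refine ⟨DBD θ n g * √n, fun hn => ⟨g, isDensityBD_rampDensity θ one_pos (by omega),
      log_two_le_entBD_rampDensity θ (by omega) one_pos (by omega), ?_⟩⟩
    rw [mul_div_cancel_right₀ _ (sqrt_pos.2 (by positivity)).ne']
  have hlarge : ∀ᶠ n in atTop, P n (2 * exp (4 * (48 * |θ| + 1000))) := by
    filter_upwards [tendsto_natCast_atTop_atTop.eventually_ge_atTop (4 * θ ^ 2),
      eventually_ge_atTop (9 ^ 4),
      (tendsto_natCast_atTop_atTop.comp tendsto_windowSize).eventually_ge_atTop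
        (2 * (48 * |θ| + 1000))] with n hθ hn hK
    exact fun _ => exists_density_dirichlet_le_of_large θ hθ hn hK
  obtain ⟨A, hA, hP⟩ := exists_forall_of_eventually hmono hex hlarge
  exact ⟨A, lt_of_lt_of_le (by positivity) hA, hP⟩

/-- The logarithmic Sobolev constant of the birth–death chain is at most of
order `n^{-1/2}`: there is a density `𝔣` with positive entropy whose Dirichlet form is at most
`C n^{-1/2}` times its entropy. -/
theorem log_sobolev_constant_upper_bound (θ : ℝ) :
    ∃ C : ℝ, 0 < C ∧ ∀ n : ℕ, 2 ≤ n →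
      ∃ g : ℕ → ℝ, (∀ m, 0 ≤ g m) ∧
        (∑ m ∈ Finset.range (n + 1), g m * piBD θ n m) = 1 ∧
        0 < entBD θ n g ∧
        DBD θ n g ≤ C * (n : ℝ) ^ (-(1 : ℝ) / 2) * entBD θ n g := by
  obtain ⟨A, hA, hdensity⟩ := exists_density_dirichlet_le θ
  have hlog := log_pos one_lt_two
  refine ⟨A / log 2, div_pos hA hlog, fun n hn => ?_⟩
  obtain ⟨g, ⟨hg, hnorm⟩, hent, hD⟩ := hdensity n hn
  refine ⟨g, hg, hnorm, hlog.trans_le hent, ?_⟩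
  have hrpow : (n : ℝ) ^ (-(1 : ℝ) / 2) = 1 / √n := by
    rw [neg_div, rpow_neg (Nat.cast_nonneg n), sqrt_eq_rpow, inv_eq_one_div]
  calc DBD θ n g ≤ A / √n := hD
    _ = A / log 2 * (n : ℝ) ^ (-(1 : ℝ) / 2) * log 2 := by rw [hrpow]; field_simp
    _ ≤ A / log 2 * (n : ℝ) ^ (-(1 : ℝ) / 2) * entBD θ n g := by gcongr

end
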